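/- On the 2-dimensional module W_k with basis {u_k := v∧w^{k-1}, x_k := w^k}, the composition M_{k,l} ∘ M'_{k,l} of the comultiplication M'_{k,l} : W_{k+l} → W_k ⊗ W_l followed by the multiplication M_{k,l} : W_k ⊗ W_l → W_{k+l} equals [k+l choose l]_q times the identity of W_{k+l}. -/

import Mathlib

open Matrix
open scoped Kronecker

noncomputable section

/-- The quantum integer `[n] = (q^n - q^{-n})/(q - q⁻¹)`. -/
def qint {K : Type*} [Field K] (q : K) (n : ℤ) : K :=
  (q ^ n - q ^ (-n)) / (q - q⁻¹)

/-- The quantum factorial `[n]! = [n][n-1]⋯[1]`. -/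
def qfact {K : Type*} [Field K] (q : K) : ℕ → K
  | 0 => 1
  | n + 1 => qint q (n + 1) * qfact q n

/-- The quantum binomial coefficient `[n choose k] = [n]!/([k]![n-k]!)` (zero if `k > n`). -/
def qbinom {K : Type*} [Field K] (q : K) (n k : ℕ) : K :=
  if k ≤ n then qfact q n / (qfact q k * qfact q (n - k)) else 0

/-- The matrix of the multiplication map `M_{k,l} : W_k ⊗ W_l → W_{k+l}` in the
bases `(u, x)` (index `0 = u = v∧w^{i-1}`, `1 = x = w^i`):
`M(x_k⊗x_l) = x_{k+l}`, `M(u_k⊗x_l) = u_{k+l}`, `M(x_k⊗u_l) = (-q)^k u_{k+l}`,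
`M(u_k⊗u_l) = 0`. -/
def Mmat {K : Type*} [Field K] (q : K) (k : ℕ) : Matrix (Fin 2) (Fin 2 × Fin 2) K :=
  single 0 (0, 1) 1 + single 0 (1, 0) ((-q) ^ k) +
    single 1 (1, 1) 1

/-- The matrix of the comultiplication map `M'_{k,l} : W_{k+l} → W_k ⊗ W_l`:
`M'(x_{k+l}) = [k+l choose k] x_k⊗x_l`,
`M'(u_{k+l}) = q^{-l}[k+l-1 choose l] u_k⊗x_l + (-1)^k [k+l-1 choose k] x_k⊗u_l`. -/
def M'mat {K : Type*} [Field K] (q : K) (k l : ℕ) : Matrix (Fin 2 × Fin 2) (Fin 2) K :=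
  single (0, 1) 0 (q ^ (-(l : ℤ)) * qbinom q (k + l - 1) l) +
    single (1, 0) 0 ((-1 : K) ^ k * qbinom q (k + l - 1) k) +
    single (1, 1) 1 (qbinom q (k + l) k)

/-- The matrix of the `R`-matrix on `C_q^{1|1} ⊗ C_q^{1|1}` in the basis `(v, w)`
(index `0 = v`, `1 = w`): `R(v⊗v) = q v⊗v`, `R(v⊗w) = (q-q⁻¹) v⊗w + w⊗v`,
`R(w⊗v) = v⊗w`, `R(w⊗w) = -q⁻¹ w⊗w`. -/
def Rmat {K : Type*} [Field K] (q : K) : Matrix (Fin 2 × Fin 2) (Fin 2 × Fin 2) K :=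
  single (0, 0) (0, 0) q + single (0, 1) (0, 1) (q - q⁻¹) +
    single (1, 0) (0, 1) 1 + single (0, 1) (1, 0) 1 +
    single (1, 1) (1, 1) (-q⁻¹)

/-! `M'` sends `x_{k+l}` to a multiple of `x_k ⊗ x_l` and `u_{k+l}` into the span of `u_k ⊗ x_l`
and `x_k ⊗ u_l`, which `M` maps back onto `x_{k+l}` and `u_{k+l}`, so `M ∘ M'` is diagonal. Its
`x`-entry is `[k+l choose k] = [k+l choose l]`. In its `u`-entry the signs cancel,
`(-q)^k (-1)^k = q^k`, leaving `q^{-l}[k+l-1 choose l] + q^k [k+l-1 choose k]`, which is the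
q-Pascal rule; after clearing factorials that rule reads `q^{-l}[k] + q^k[l] = [k+l]`. -/

section MOY

variable {K : Type*} [Field K]

theorem qint_add (q : K) (a b : ℤ) :
    q ^ (-b) * qint q a + q ^ a * qint q b = qint q (a + b) := by
  rcases eq_or_ne q 0 with rfl | hq
  · simp [qint]
  simp only [qint, ← mul_div_assoc, ← add_div, mul_sub, ← zpow_add₀ hq]
  ring_nf

theorem qfact_succ (q : K) (n : ℕ) : qfact q (n + 1) = qint q (n + 1) * qfact q n := rfl

theorem qfact_ne_zero_of_le (q : K) {m n : ℕ} (h : m ≤ n) (hn : qfact q n ≠ 0) :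
    qfact q m ≠ 0 := by
  induction n, h using Nat.le_induction with
  | base => exact hn
  | succ n _ ih => exact ih (right_ne_zero_of_mul hn)

theorem qbinom_add_left (q : K) (a b : ℕ) :
    qbinom q (a + b) a = qfact q (a + b) / (qfact q a * qfact q b) := by
  rw [qbinom, if_pos (Nat.le_add_right a b), Nat.add_sub_cancel_left]

theorem qbinom_add_symm (q : K) (a b : ℕ) : qbinom q (a + b) a = qbinom q (a + b) b := by
  rw [qbinom_add_left, add_comm, qbinom_add_left, mul_comm]

theorem qbinom_pascal (q : K) (a b : ℕ) :
    qbinom q (a + b + 2) (b + 1) =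
      q ^ (-(b + 1 : ℤ)) * qbinom q (a + b + 1) (b + 1) +
        q ^ (a + 1) * qbinom q (a + b + 1) (a + 1) := by
  have h₂ : qbinom q (a + b + 2) (b + 1) =
      qfact q (a + b + 2) / (qfact q (b + 1) * qfact q (a + 1)) := by
    rw [show a + b + 2 = (b + 1) + (a + 1) by ring, qbinom_add_left]
  have hb : qbinom q (a + b + 1) (b + 1) = qfact q (a + b + 1) / (qfact q (b + 1) * qfact q a) := by
    rw [show a + b + 1 = (b + 1) + a by ring, qbinom_add_left]
  have ha : qbinom q (a + b + 1) (a + 1) = qfact q (a + b + 1) / (qfact q (a + 1) * qfact q b) := by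
    rw [show a + b + 1 = (a + 1) + b by ring, qbinom_add_left]
  rw [h₂, hb, ha]
  rcases eq_or_ne (qfact q (a + b + 1)) 0 with h0 | h0
  -- `q` is a root of unity of small order: all three numerators vanish.
  · rw [qfact_succ q (a + b + 1), h0]
    simp
  have hFa := qfact_ne_zero_of_le q (show a + 1 ≤ a + b + 1 by omega) h0
  have hFb := qfact_ne_zero_of_le q (show b + 1 ≤ a + b + 1 by omega) h0
  rw [qfact_succ q a] at hFa ⊢
  rw [qfact_succ q b] at hFb ⊢
  have hsum : qint q ((a + b + 1 : ℕ) + 1) =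
      q ^ (-(b + 1 : ℤ)) * qint q (a + 1) + q ^ (a + 1) * qint q (b + 1) := by
    rw [show ((a + b + 1 : ℕ) : ℤ) + 1 = (a + 1) + (b + 1) by push_cast; ring, ← qint_add]
    norm_cast
  rw [qfact_succ q (a + b + 1), hsum]
  obtain ⟨hA, hFa'⟩ := mul_ne_zero_iff.mp hFa
  obtain ⟨hB, hFb'⟩ := mul_ne_zero_iff.mp hFb
  field_simp

theorem Mmat_mul_M'mat (q : K) (k l : ℕ) :
    Mmat q k * M'mat q k l = diagonal ![q ^ (-(l : ℤ)) * qbinom q (k + l - 1) l +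
      q ^ k * qbinom q (k + l - 1) k, qbinom q (k + l) k] := by
  ext i j
  fin_cases i <;> fin_cases j <;>
    simp [Mmat, M'mat, mul_apply, Fintype.sum_prod_type, Fin.sum_univ_succ, ← mul_assoc, ← mul_pow]

end MOY

theorem moy_move2_general {K : Type*} [Field K] (q : K) (k l : ℕ) (hk : 1 ≤ k) (hl : 1 ≤ l) :
    Mmat q k * M'mat q k l = qbinom q (k + l) l • (1 : Matrix (Fin 2) (Fin 2) K) := by
  obtain ⟨a, rfl⟩ := Nat.exists_eq_add_of_le' hk
  obtain ⟨b, rfl⟩ := Nat.exists_eq_add_of_le' hl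
  rw [Mmat_mul_M'mat, smul_one_eq_diagonal, qbinom_add_symm q (a + 1) (b + 1),
    show a + 1 + (b + 1) = a + b + 2 by ring, show a + b + 2 - 1 = a + b + 1 by omega,
    Nat.cast_add_one, ← qbinom_pascal]
  congr 1
  ext i
  fin_cases i <;> rfl

/-- MOY Move 2: `M_{k,l} ∘ M'_{k,l} = [k+l choose l]·id` on `W_{k+l}`. -/
theorem moy_move2 {K : Type*} [Field K] (q : K) (hq : q ≠ 0)
    (hq' : q - q⁻¹ ≠ 0) (k l : ℕ) (hk : 1 ≤ k) (hl : 1 ≤ l) :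
    Mmat q k * M'mat q k l = qbinom q (k + l) l • (1 : Matrix (Fin 2) (Fin 2) K) :=
  moy_move2_general q k l hk hl
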